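/- arXiv:2002.11087 — 3 statements merged into one kernel-verified Lean document; each statement's English description precedes it below -/
import Mathlib

section
/- Let v and w be primitive elements in a braided Hopf algebra (e.g. the tensor algebra of a braided vector space of diagonal type), Z^θ-homogeneous of degrees α and β respectively, with braiding given by a bicharacter q. Then Δ((ad_c v)w) = (ad_c v)w ⊗ 1 + 1 ⊗ (ad_c v)w + (1 − q(α,β)q(β,α)) v ⊗ w. In particular (ad_c v)w is primitive if and only if q(α,β)q(β,α) = 1 (or (ad_c v)w contributes trivially). -/
open scoped TensorProduct

noncomputable section

/-- Let `v, w` be primitive elements of a braided Hopf algebra `A`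
(e.g. the tensor algebra of a braided vector space of diagonal type), homogeneous of
`ℤ^θ`-degrees `α`, `β`, with the braiding given by a bicharacter `q`, so that the
comultiplication `Δ` is multiplicative for the twisted product
`(a ⊗ b)(c ⊗ d) = q(deg b, deg c) (a c) ⊗ (b d)` on homogeneous tensor factors.  Then
`Δ((ad_c v) w) = (ad_c v) w ⊗ 1 + 1 ⊗ (ad_c v) w + (1 − q(α,β) q(β,α)) v ⊗ w`;
in particular (when `v ⊗ w ≠ 0`), `(ad_c v) w` is primitive iff `q(α,β) q(β,α) = 1`. -/
theorem stmt3 {k : Type*} [Field k] {θ : ℕ} (hθ : 0 < θ)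
    {A : Type*} [Ring A] [Algebra k A]
    (q : (Fin θ → ℤ) → (Fin θ → ℤ) → kˣ)
    (hq₁ : ∀ a b c, q (a + b) c = q a c * q b c)
    (hq₂ : ∀ a b c, q a (b + c) = q a b * q a c)
    (𝒜 : (Fin θ → ℤ) → Submodule k A)
    (h𝒜mul : ∀ α β x y, x ∈ 𝒜 α → y ∈ 𝒜 β → x * y ∈ 𝒜 (α + β))
    (h𝒜one : (1 : A) ∈ 𝒜 0)
    (m2 : (A ⊗[k] A) →ₗ[k] (A ⊗[k] A) →ₗ[k] (A ⊗[k] A))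
    (hm2 : ∀ (a b c d : A) (β' γ' : Fin θ → ℤ), b ∈ 𝒜 β' → c ∈ 𝒜 γ' →
      m2 (a ⊗ₜ b) (c ⊗ₜ d) = (q β' γ' : k) • ((a * c) ⊗ₜ[k] (b * d)))
    (Δ : A →ₗ[k] A ⊗[k] A)
    (hΔmul : ∀ x y : A, Δ (x * y) = m2 (Δ x) (Δ y))
    (hΔone : Δ 1 = 1 ⊗ₜ 1)
    (v w : A) (α β : Fin θ → ℤ) (hv : v ∈ 𝒜 α) (hw : w ∈ 𝒜 β)
    (hvprim : Δ v = v ⊗ₜ 1 + 1 ⊗ₜ v) (hwprim : Δ w = w ⊗ₜ 1 + 1 ⊗ₜ w) :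
    Δ (v * w - (q α β : k) • (w * v))
      = (v * w - (q α β : k) • (w * v)) ⊗ₜ 1
        + 1 ⊗ₜ (v * w - (q α β : k) • (w * v))
        + (1 - (q α β * q β α : k)) • (v ⊗ₜ[k] w)
    ∧ (v ⊗ₜ[k] w ≠ 0 →
        (Δ (v * w - (q α β : k) • (w * v))
            = (v * w - (q α β : k) • (w * v)) ⊗ₜ 1
              + 1 ⊗ₜ (v * w - (q α β : k) • (w * v))
          ↔ (q α β * q β α : kˣ) = 1)) := by
  have hq0l : ∀ c, q 0 c = 1 := by
    intro c
    have h := hq₁ 0 0 c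
    rw [add_zero] at h
    exact (left_eq_mul.mp h)
  have hq0r : ∀ c, q c 0 = 1 := by
    intro c
    have h := hq₂ c 0 0
    rw [add_zero] at h
    exact (left_eq_mul.mp h)
  have keyvw : Δ (v * w)
      = (v * w) ⊗ₜ 1 + 1 ⊗ₜ (v * w) + v ⊗ₜ w + (q α β : k) • (w ⊗ₜ[k] v) := by
    rw [hΔmul, hvprim, hwprim]
    simp only [map_add, LinearMap.add_apply]
    rw [hm2 v 1 w 1 0 β h𝒜one hw, hm2 v 1 1 w 0 0 h𝒜one h𝒜one,
      hm2 1 v w 1 α β hv hw, hm2 1 v 1 w α 0 hv h𝒜one]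
    simp only [hq0l, hq0r, Units.val_one, one_smul, one_mul, mul_one]
    abel
  have keywv : Δ (w * v)
      = (w * v) ⊗ₜ 1 + 1 ⊗ₜ (w * v) + w ⊗ₜ v + (q β α : k) • (v ⊗ₜ[k] w) := by
    rw [hΔmul, hwprim, hvprim]
    simp only [map_add, LinearMap.add_apply]
    rw [hm2 w 1 v 1 0 α h𝒜one hv, hm2 w 1 1 v 0 0 h𝒜one h𝒜one,
      hm2 1 w v 1 β α hw hv, hm2 1 w 1 v β 0 hw h𝒜one]
    simp only [hq0l, hq0r, Units.val_one, one_smul, one_mul, mul_one]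
    abel
  have main : Δ (v * w - (q α β : k) • (w * v))
      = (v * w - (q α β : k) • (w * v)) ⊗ₜ 1
        + 1 ⊗ₜ (v * w - (q α β : k) • (w * v))
        + (1 - (q α β * q β α : k)) • (v ⊗ₜ[k] w) := by
    rw [map_sub, map_smul, keyvw, keywv]
    simp only [smul_add, smul_smul, sub_smul, one_smul, TensorProduct.sub_tmul,
      TensorProduct.tmul_sub, TensorProduct.smul_tmul', TensorProduct.smul_tmul,
      Units.val_mul]
    abel
  refine ⟨main, fun hne => ?_⟩
  constructor
  · intro h
    rw [main] at h
    have h0 : (1 - (q α β * q β α : k)) • (v ⊗ₜ[k] w) = 0 := by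
      rwa [add_eq_left] at h
    rcases smul_eq_zero.mp h0 with hc | hc
    · have h1 : ((q α β * q β α : kˣ) : k) = 1 := by
        have := sub_eq_zero.mp hc
        simpa using this.symm
      exact Units.ext (by simpa using h1)
    · exact absurd hc hne
  · intro h
    have h1 : ((q α β : k) * (q β α : k)) = 1 := by
      rw [← Units.val_mul, h, Units.val_one]
    rw [main, h1]
    simp

end
end

section
/- Let q be a primitive square root of unity (q = −1) and consider B = k⟨x_1,x_2⟩/⟨(ad_c x_1)^4 x_2, (ad_c x_2)^2 x_1⟩ with braiding q_11 = q = −1, q_22 = q^3 = −1, q_12 q_21 = q^{-3} = −1. Then x_{112}^2 = 0 holds in B, where x_{112} = (ad_c x_1)^2 x_2. -/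
noncomputable section

namespace Stmt8

variable {k : Type*} [Field k]

/-- The bicharacter on `ℤ²` extending a braiding matrix `Q`. -/
def qb (Q : Fin 2 → Fin 2 → k) (α β : Fin 2 → ℤ) : k :=
  ∏ a, ∏ b, Q a b ^ (α a * β b)

/-- Degree of the generator `x_a`. -/
def ee (a : Fin 2) : Fin 2 → ℤ := Pi.single a 1

/-- Braided commutator of two homogeneous elements carried with their degrees. -/
def brk (Q : Fin 2 → Fin 2 → k) (p r : FreeAlgebra k (Fin 2) × (Fin 2 → ℤ)) :
    FreeAlgebra k (Fin 2) × (Fin 2 → ℤ) :=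
  (p.1 * r.1 - qb Q p.2 r.2 • (r.1 * p.1), p.2 + r.2)

/-- The generator `x_a` together with its degree. -/
def gen (a : Fin 2) : FreeAlgebra k (Fin 2) × (Fin 2 → ℤ) :=
  (FreeAlgebra.ι k a, ee a)

end Stmt8

open Stmt8

lemma qb_calc {k : Type*} [Field k] (Q : Fin 2 → Fin 2 → k) (α β : Fin 2 → ℤ) :
    qb Q α β = Q 0 0 ^ (α 0 * β 0) * Q 0 1 ^ (α 0 * β 1)
      * (Q 1 0 ^ (α 1 * β 0) * Q 1 1 ^ (α 1 * β 1)) := by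
  simp [qb, Fin.prod_univ_two]

/-- Let `q = −1` and consider
`B = k⟨x_1,x_2⟩/⟨(ad_c x_1)^4 x_2, (ad_c x_2)^2 x_1⟩` with braiding
`q_11 = q = −1`, `q_22 = q^3 = −1`, `q_12 q_21 = q^{-3} = −1` (so `q_21 = −q_12⁻¹`).
Then `x_112^2 = 0` holds in `B`, where `x_112 = (ad_c x_1)^2 x_2`. -/
theorem stmt8 {k : Type*} [Field k] [CharZero k]
    (q q12 : k) (hq : q = -1) (hq12 : q12 ≠ 0)
    (Q : Fin 2 → Fin 2 → k) (hQ : Q = ![![q, q12], ![q12⁻¹ * q ^ (-3 : ℤ), q ^ 3]])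
    (rel : FreeAlgebra k (Fin 2) → FreeAlgebra k (Fin 2) → Prop)
    (hrel : rel = fun a b => b = 0 ∧
      (a = (brk Q (gen 0) (brk Q (gen 0) (brk Q (gen 0) (brk Q (gen 0) (gen 1))))).1
        ∨ a = (brk Q (gen 1) (brk Q (gen 1) (gen 0))).1)) :
    RingQuot.mkAlgHom k rel (brk Q (gen 0) (brk Q (gen 0) (gen 1))).1
      * RingQuot.mkAlgHom k rel (brk Q (gen 0) (brk Q (gen 0) (gen 1))).1 = 0 := by
  have hA : qb Q (ee 0) (ee 1) = q12 := by
    rw [qb_calc]; simp [ee, hQ, hq, Pi.single_apply]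
  have hB : qb Q (ee 0) (ee 0 + ee 1) = -q12 := by
    rw [qb_calc]; simp [ee, hQ, hq, Pi.single_apply]
  have hC : qb Q (ee 0) (ee 0 + (ee 0 + ee 1)) = q12 := by
    rw [qb_calc]; simp [ee, hQ, hq, Pi.single_apply]
  have hD : qb Q (ee 0) (ee 0 + (ee 0 + (ee 0 + ee 1))) = -q12 := by
    rw [qb_calc]; simp [ee, hQ, hq, Pi.single_apply]; norm_num
  have hE : qb Q (ee 1) (ee 0) = -q12⁻¹ := by
    rw [qb_calc]; simp [ee, hQ, hq, Pi.single_apply]; norm_num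
  have hG : qb Q (ee 1) (ee 1 + ee 0) = q12⁻¹ := by
    rw [qb_calc]; simp [ee, hQ, hq, Pi.single_apply]
  set f := RingQuot.mkAlgHom k rel with hf
  have hR1 : rel (brk Q (gen 0) (brk Q (gen 0) (brk Q (gen 0) (brk Q (gen 0) (gen 1))))).1 0 := by
    rw [hrel]; exact ⟨rfl, Or.inl rfl⟩
  have hR2 : rel (brk Q (gen 1) (brk Q (gen 1) (gen 0))).1 0 := by
    rw [hrel]; exact ⟨rfl, Or.inr rfl⟩
  have h1 : f (brk Q (gen 0) (brk Q (gen 0) (brk Q (gen 0) (brk Q (gen 0) (gen 1))))).1 = 0 := by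
    have := RingQuot.mkAlgHom_rel k hR1
    simpa using this
  have h2 : f (brk Q (gen 1) (brk Q (gen 1) (gen 0))).1 = 0 := by
    have := RingQuot.mkAlgHom_rel k hR2
    simpa using this
  set y1 := f (FreeAlgebra.ι k 0) with hy1
  set y2 := f (FreeAlgebra.ι k 1) with hy2
  have key : (2:k) • (f (brk Q (gen 0) (brk Q (gen 0) (gen 1))).1
        * f (brk Q (gen 0) (brk Q (gen 0) (gen 1))).1) =
      (-(q12⁻¹*q12⁻¹)) • (f (brk Q (gen 0) (brk Q (gen 0) (brk Q (gen 0) (brk Q (gen 0) (gen 1))))).1 * y2)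
      + (-(q12*q12)) • (y2 * f (brk Q (gen 0) (brk Q (gen 0) (brk Q (gen 0) (brk Q (gen 0) (gen 1))))).1)
      + (q12^6) • (f (brk Q (gen 1) (brk Q (gen 1) (gen 0))).1 * (y1*(y1*y1)))
      + (q12^4) • (y1 * (f (brk Q (gen 1) (brk Q (gen 1) (gen 0))).1 * (y1*y1)))
      + (-(q12^2)) • (y1 * (y1 * (f (brk Q (gen 1) (brk Q (gen 1) (gen 0))).1 * y1)))
      + (-1:k) • (y1 * (y1 * (y1 * f (brk Q (gen 1) (brk Q (gen 1) (gen 0))).1))) := by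
    simp only [brk, gen, map_sub, map_add, map_smul, map_mul, hA, hB, hC, hD, hE, hG, neg_smul, sub_neg_eq_add, ← hy1, ← hy2]
    simp only [smul_sub, smul_add, sub_mul, mul_sub, add_mul, mul_add,
      smul_mul_assoc, mul_smul_comm, smul_smul, mul_assoc, neg_smul, neg_neg]
    match_scalars <;> field_simp <;> ring
  rw [h1, h2] at key
  simp only [mul_zero, zero_mul, smul_zero, add_zero, zero_add, neg_zero] at key
  have h2ne : (2:k) ≠ 0 := two_ne_zero
  rcases smul_eq_zero.mp key with h | h
  · exact absurd h h2ne
  · exact h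


end
end

section
/- In the setting of type A_2 with N = 3 and B̂ = T(V)/⟨x_{1112}, x_{2221}, x_{2112}, x_{1221}⟩, the elements z_1 = x_2^3, z_2 = x_{221}, z_3 = x_{112}, z_4 = x_1^3, z_5 = x_{12}^3 pairwise q-commute (for each pair (z_a, z_b) there is a scalar λ ∈ k^× with z_a z_b = λ z_b z_a). -/
noncomputable section

namespace Stmt14

variable {k : Type*} [Field k]

/-- The bicharacter on `ℤ²` extending a braiding matrix `Q`. -/
def qb (Q : Fin 2 → Fin 2 → k) (α β : Fin 2 → ℤ) : k :=
  ∏ a, ∏ b, Q a b ^ (α a * β b)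

/-- Degree of the generator `x_a`. -/
def ee (a : Fin 2) : Fin 2 → ℤ := Pi.single a 1

/-- Braided commutator of two homogeneous elements carried with their degrees. -/
def brk (Q : Fin 2 → Fin 2 → k) (p r : FreeAlgebra k (Fin 2) × (Fin 2 → ℤ)) :
    FreeAlgebra k (Fin 2) × (Fin 2 → ℤ) :=
  (p.1 * r.1 - qb Q p.2 r.2 • (r.1 * p.1), p.2 + r.2)

/-- The generator `x_a` together with its degree. -/
def gen (a : Fin 2) : FreeAlgebra k (Fin 2) × (Fin 2 → ℤ) :=
  (FreeAlgebra.ι k a, ee a)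

end Stmt14

open Stmt14

namespace Stmt14Aux

variable {k : Type*} [Field k] {R : Type*} [Ring R] [Algebra k R]

theorem qswap {u v : R} {a : k} (ha : a ≠ 0) (h : u * v = a • (v * u)) :
    v * u = a⁻¹ • (u * v) := by
  rw [h, smul_smul, inv_mul_cancel₀ ha, one_smul]

theorem qmul {z u v : R} {a b : k} (hu : z * u = a • (u * z)) (hv : z * v = b • (v * z)) :
    z * (u * v) = (a * b) • ((u * v) * z) := by
  rw [← mul_assoc, hu, smul_mul_assoc, mul_assoc, hv, mul_smul_comm, smul_smul,
    mul_assoc u v z]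

theorem qsub' {z u v : R} {a c : k} (hu : z * u = a • (u * z)) (hv : z * v = a • (v * z)) :
    z * (u - c • v) = a • ((u - c • v) * z) := by
  rw [mul_sub, mul_smul_comm, hu, hv, sub_mul, smul_mul_assoc]
  module

theorem qpow3 {z u : R} {a : k} (hu : z * u = a • (u * z)) :
    z * u ^ 3 = a ^ 3 • (u ^ 3 * z) := by
  have h3 := qmul hu (qmul hu hu)
  rw [show u ^ 3 = u * (u * u) by rw [pow_succ, pow_two, mul_assoc], h3]
  module

/-- `x_{12}`-type element. -/
def bB (b : k) (x y : R) : R := x * y - b • (y * x)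

/-- `x_{112}`-type element. -/
def aA (q b : k) (x y : R) : R := x * bB b x y - (q * b) • (bB b x y * x)

theorem hitB {x y z : R} {b a1 a2 : k} (hx : z * x = a1 • (x * z)) (hy : z * y = a2 • (y * z)) :
    z * bB b x y = (a1 * a2) • (bB b x y * z) := by
  refine qsub' (qmul hx hy) ?_
  rw [qmul hy hx, mul_comm a2 a1]

theorem hitA {x y z : R} {q b a1 a2 : k} (hx : z * x = a1 • (x * z)) (hy : z * y = a2 • (y * z)) :
    z * aA q b x y = (a1 * (a1 * a2)) • (aA q b x y * z) := by
  have hv : z * (bB b x y * x) = (a1 * (a1 * a2)) • ((bB b x y * x) * z) := by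
    rw [qmul (hitB hx hy) hx]
    module
  unfold aA
  exact qsub' (qmul hx (hitB hx hy)) hv

/-- The key identity: the quantum Serre relation forces `x^3` to `q`-commute with `y`. -/
theorem keyid {x y : R} {q b : k} (hq3 : q ^ 3 = 1) (hsum : 1 + q + q ^ 2 = 0)
    (hr : x * aA q b x y = (q ^ 2 * b) • (aA q b x y * x)) :
    x ^ 3 * y = b ^ 3 • (y * x ^ 3) := by
  have e1 : x * aA q b x y - (q ^ 2 * b) • (aA q b x y * x) =
      (x * (x * (x * y)) - (q ^ 3 * b ^ 3) • (y * (x * (x * x))))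
        - ((1 + q + q ^ 2) * b) • (x * (x * (y * x)))
        + ((q + q ^ 2 + q ^ 3) * b ^ 2) • (x * (y * (x * x))) := by
    simp only [aA, bB, mul_sub, sub_mul, mul_smul_comm, smul_mul_assoc, smul_sub, smul_smul,
      mul_assoc]
    module
  have h0 : (1 + q + q ^ 2) * b = 0 := by rw [hsum]; ring
  have h0' : (q + q ^ 2 + q ^ 3) * b ^ 2 = 0 := by linear_combination (b ^ 2 * q) * hsum
  have h1 : q ^ 3 * b ^ 3 = b ^ 3 := by rw [hq3]; ring
  rw [h0, h0', h1, zero_smul, zero_smul, sub_zero, add_zero, sub_eq_zero.mpr hr, eq_comm,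
    sub_eq_zero] at e1
  calc x ^ 3 * y = x * (x * (x * y)) := by
        simp only [pow_succ, pow_zero, one_mul, mul_assoc]
    _ = b ^ 3 • (y * (x * (x * x))) := e1
    _ = b ^ 3 • (y * x ^ 3) := by simp only [pow_succ, pow_zero, one_mul, mul_assoc]

end Stmt14Aux

open Stmt14Aux

/-- In type `A_2` with `N = 3` and
`B̂ = T(V)/⟨x_1112, x_2221, x_2112, x_1221⟩`, the elements
`z_1 = x_2^3`, `z_2 = x_221`, `z_3 = x_112`, `z_4 = x_1^3`, `z_5 = x_12^3`
pairwise `q`-commute: for each pair `(z_a, z_b)` there is `λ ∈ kˣ` with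
`z_a z_b = λ • z_b z_a`. -/
theorem stmt14 {k : Type*} [Field k] [CharZero k]
    (q q12 q21 : k) (hq3 : q ^ 3 = 1) (hq1 : q ≠ 1) (hq12 : q12 ≠ 0)
    (hq21 : q12 * q21 = q⁻¹)
    (Q : Fin 2 → Fin 2 → k) (hQ : Q = ![![q, q12], ![q21, q]])
    (rel : FreeAlgebra k (Fin 2) → FreeAlgebra k (Fin 2) → Prop)
    (hrel : rel = fun a b => b = 0 ∧
      (a = (brk Q (gen 0) (brk Q (gen 0) (brk Q (gen 0) (gen 1)))).1
        ∨ a = (brk Q (gen 1) (brk Q (gen 1) (brk Q (gen 1) (gen 0)))).1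
        ∨ a = (brk Q (gen 1) (brk Q (gen 0) (brk Q (gen 0) (gen 1)))).1
        ∨ a = (brk Q (gen 0) (brk Q (gen 1) (brk Q (gen 1) (gen 0)))).1))
    (z : Fin 5 → RingQuot rel)
    (hz : z = ![RingQuot.mkAlgHom k rel (FreeAlgebra.ι k 1 ^ 3),
      RingQuot.mkAlgHom k rel (brk Q (gen 1) (brk Q (gen 1) (gen 0))).1,
      RingQuot.mkAlgHom k rel (brk Q (gen 0) (brk Q (gen 0) (gen 1))).1,
      RingQuot.mkAlgHom k rel (FreeAlgebra.ι k 0 ^ 3),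
      RingQuot.mkAlgHom k rel ((brk Q (gen 0) (gen 1)).1 ^ 3)]) :
    ∀ a b : Fin 5, ∃ lam : kˣ, z a * z b = (lam : k) • (z b * z a) := by
  -- basic scalar facts
  have hq0 : q ≠ 0 := by
    intro h; rw [h] at hq3; norm_num at hq3
  have hc0 : q21 ≠ 0 := by
    intro h
    rw [h, mul_zero] at hq21
    exact hq0 (inv_eq_zero.mp hq21.symm)
  have hsum : 1 + q + q ^ 2 = 0 := by
    have h : (q - 1) * (1 + q + q ^ 2) = 0 := by linear_combination hq3
    rcases mul_eq_zero.mp h with h' | h'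
    · exact absurd (sub_eq_zero.mp h') hq1
    · exact h'
  subst hQ
  -- the generators in the quotient
  set φ := RingQuot.mkAlgHom k rel with hφ
  set X1 := φ (FreeAlgebra.ι k 0) with hX1
  set X2 := φ (FreeAlgebra.ι k 1) with hX2
  -- values of the bicharacter
  have qb01 : qb ![![q, q12], ![q21, q]] (ee 0) (ee 1) = q12 := by
    simp [qb, ee, Fin.prod_univ_two, Pi.single_apply, zpow_two, zpow_one, zpow_zero]
    try ring
    try tauto
  have qb10 : qb ![![q, q12], ![q21, q]] (ee 1) (ee 0) = q21 := by
    simp [qb, ee, Fin.prod_univ_two, Pi.single_apply, zpow_two, zpow_one, zpow_zero]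
    try ring
    try tauto
  have qbA : qb ![![q, q12], ![q21, q]] (ee 0) (ee 0 + ee 1) = q * q12 := by
    simp [qb, ee, Fin.prod_univ_two, Pi.single_apply, zpow_two, zpow_one, zpow_zero]
    try ring
    try tauto
  have qbC : qb ![![q, q12], ![q21, q]] (ee 1) (ee 1 + ee 0) = q * q21 := by
    simp [qb, ee, Fin.prod_univ_two, Pi.single_apply, zpow_two, zpow_one, zpow_zero]
    try ring
    try tauto
  have qbAA : qb ![![q, q12], ![q21, q]] (ee 0) (ee 0 + (ee 0 + ee 1)) = q ^ 2 * q12 := by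
    simp [qb, ee, Fin.prod_univ_two, Pi.single_apply, zpow_two, zpow_one, zpow_zero]
    try ring
    try tauto
  have qbCC : qb ![![q, q12], ![q21, q]] (ee 1) (ee 1 + (ee 1 + ee 0)) = q ^ 2 * q21 := by
    simp [qb, ee, Fin.prod_univ_two, Pi.single_apply, zpow_two, zpow_one, zpow_zero]
    try ring
    try tauto
  have qb3 : qb ![![q, q12], ![q21, q]] (ee 1) (ee 0 + (ee 0 + ee 1)) = q * q21 ^ 2 := by
    simp [qb, ee, Fin.prod_univ_two, Pi.single_apply, zpow_two, zpow_one, zpow_zero]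
    try ring
    try tauto
  have qb4 : qb ![![q, q12], ![q21, q]] (ee 0) (ee 1 + (ee 1 + ee 0)) = q * q12 ^ 2 := by
    simp [qb, ee, Fin.prod_univ_two, Pi.single_apply, zpow_two, zpow_one, zpow_zero]
    try ring
    try tauto
  -- images of the braided commutators
  have hφB : φ (brk ![![q, q12], ![q21, q]] (gen 0) (gen 1)).1 = bB q12 X1 X2 := by
    simp only [brk, gen, qb01, map_sub, map_mul, map_smul, bB, hX1, hX2]
  have hφD : φ (brk ![![q, q12], ![q21, q]] (gen 1) (gen 0)).1 = bB q21 X2 X1 := by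
    simp only [brk, gen, qb10, map_sub, map_mul, map_smul, bB, hX1, hX2]
  have hφA : φ (brk ![![q, q12], ![q21, q]] (gen 0)
      (brk ![![q, q12], ![q21, q]] (gen 0) (gen 1))).1 = aA q q12 X1 X2 := by
    simp only [brk, gen, qb01, qbA, map_sub, map_mul, map_smul, aA, bB, hX1, hX2]
  have hφC : φ (brk ![![q, q12], ![q21, q]] (gen 1)
      (brk ![![q, q12], ![q21, q]] (gen 1) (gen 0))).1 = aA q q21 X2 X1 := by
    simp only [brk, gen, qb10, qbC, map_sub, map_mul, map_smul, aA, bB, hX1, hX2]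
  -- the four defining relations, in the quotient
  have hr1 : X1 * aA q q12 X1 X2 = (q ^ 2 * q12) • (aA q q12 X1 X2 * X1) := by
    have w : rel (brk ![![q, q12], ![q21, q]] (gen 0) (brk ![![q, q12], ![q21, q]] (gen 0)
        (brk ![![q, q12], ![q21, q]] (gen 0) (gen 1)))).1 0 := by
      rw [hrel]; exact ⟨rfl, Or.inl rfl⟩
    have e := (RingQuot.mkAlgHom_rel k w).trans (map_zero _)
    simp only [brk, gen, qb01, qbA, qbAA, map_sub, map_mul, map_smul, ← hφ, ← hX1, ← hX2] at e
    simp only [aA, bB]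
    exact sub_eq_zero.mp e
  have hr2 : X2 * aA q q21 X2 X1 = (q ^ 2 * q21) • (aA q q21 X2 X1 * X2) := by
    have w : rel (brk ![![q, q12], ![q21, q]] (gen 1) (brk ![![q, q12], ![q21, q]] (gen 1)
        (brk ![![q, q12], ![q21, q]] (gen 1) (gen 0)))).1 0 := by
      rw [hrel]; exact ⟨rfl, Or.inr (Or.inl rfl)⟩
    have e := (RingQuot.mkAlgHom_rel k w).trans (map_zero _)
    simp only [brk, gen, qb10, qbC, qbCC, map_sub, map_mul, map_smul, ← hφ, ← hX1, ← hX2] at e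
    simp only [aA, bB]
    exact sub_eq_zero.mp e
  have hr3 : X2 * aA q q12 X1 X2 = (q * q21 ^ 2) • (aA q q12 X1 X2 * X2) := by
    have w : rel (brk ![![q, q12], ![q21, q]] (gen 1) (brk ![![q, q12], ![q21, q]] (gen 0)
        (brk ![![q, q12], ![q21, q]] (gen 0) (gen 1)))).1 0 := by
      rw [hrel]; exact ⟨rfl, Or.inr (Or.inr (Or.inl rfl))⟩
    have e := (RingQuot.mkAlgHom_rel k w).trans (map_zero _)
    simp only [brk, gen, qb01, qbA, qb3, map_sub, map_mul, map_smul, ← hφ, ← hX1, ← hX2] at e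
    simp only [aA, bB]
    exact sub_eq_zero.mp e
  have hr4 : X1 * aA q q21 X2 X1 = (q * q12 ^ 2) • (aA q q21 X2 X1 * X1) := by
    have w : rel (brk ![![q, q12], ![q21, q]] (gen 0) (brk ![![q, q12], ![q21, q]] (gen 1)
        (brk ![![q, q12], ![q21, q]] (gen 1) (gen 0)))).1 0 := by
      rw [hrel]; exact ⟨rfl, Or.inr (Or.inr (Or.inr rfl))⟩
    have e := (RingQuot.mkAlgHom_rel k w).trans (map_zero _)
    simp only [brk, gen, qb10, qbC, qb4, map_sub, map_mul, map_smul, ← hφ, ← hX1, ← hX2] at e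
    simp only [aA, bB]
    exact sub_eq_zero.mp e
  -- the `z`'s in terms of `X1, X2`
  have hz0 : z 0 = X2 ^ 3 := by
    rw [hz]
    show φ _ = _
    rw [map_pow]
  have hz1 : z 1 = aA q q21 X2 X1 := by
    rw [hz]
    show φ _ = _
    exact hφC
  have hz2 : z 2 = aA q q12 X1 X2 := by
    rw [hz]
    exact hφA
  have hz3 : z 3 = X1 ^ 3 := by
    rw [hz]
    show φ _ = _
    rw [map_pow]
  have hz4 : z 4 = bB q12 X1 X2 ^ 3 := by
    rw [hz]
    show φ _ = _
    rw [map_pow, hφB]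
  -- Serre relations give `q`-commutation of cubes of generators
  have K1 : X1 ^ 3 * X2 = q12 ^ 3 • (X2 * X1 ^ 3) := keyid hq3 hsum hr1
  have K2 : X2 ^ 3 * X1 = q21 ^ 3 • (X1 * X2 ^ 3) := keyid hq3 hsum hr2
  -- commutation scalars for z_0 .. z_3 against the generators
  have hA : ∀ a : Fin 5, a ≠ 4 → ∃ s t : k, s ≠ 0 ∧ t ≠ 0 ∧
      z a * X1 = s • (X1 * z a) ∧ z a * X2 = t • (X2 * z a) := by
    intro a ha
    rcases (by omega : a = 0 ∨ a = 1 ∨ a = 2 ∨ a = 3 ∨ a = 4) with rfl | rfl | rfl | rfl | rfl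
    · refine ⟨q21 ^ 3, 1, pow_ne_zero _ hc0, one_ne_zero, ?_, ?_⟩
      · rw [hz0]; exact K2
      · rw [hz0]; rw [one_smul, ← pow_succ, pow_succ']
    · refine ⟨(q * q12 ^ 2)⁻¹, (q ^ 2 * q21)⁻¹,
        inv_ne_zero (mul_ne_zero hq0 (pow_ne_zero _ hq12)),
        inv_ne_zero (mul_ne_zero (pow_ne_zero _ hq0) hc0), ?_, ?_⟩
      · rw [hz1]; exact qswap (mul_ne_zero hq0 (pow_ne_zero _ hq12)) hr4
      · rw [hz1]; exact qswap (mul_ne_zero (pow_ne_zero _ hq0) hc0) hr2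
    · refine ⟨(q ^ 2 * q12)⁻¹, (q * q21 ^ 2)⁻¹,
        inv_ne_zero (mul_ne_zero (pow_ne_zero _ hq0) hq12),
        inv_ne_zero (mul_ne_zero hq0 (pow_ne_zero _ hc0)), ?_, ?_⟩
      · rw [hz2]; exact qswap (mul_ne_zero (pow_ne_zero _ hq0) hq12) hr1
      · rw [hz2]; exact qswap (mul_ne_zero hq0 (pow_ne_zero _ hc0)) hr3
    · refine ⟨1, q12 ^ 3, one_ne_zero, pow_ne_zero _ hq12, ?_, ?_⟩
      · rw [hz3]; rw [one_smul, ← pow_succ, pow_succ']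
      · rw [hz3]; exact K1
    · exact absurd rfl ha
  -- pairwise commutation for a ≠ 4
  have hfor : ∀ a b : Fin 5, a ≠ 4 → ∃ lam : kˣ, z a * z b = (lam : k) • (z b * z a) := by
    intro a b ha
    obtain ⟨s, t, ha1', ha2', h1, h2⟩ := hA a ha
    rcases (by omega : b = 0 ∨ b = 1 ∨ b = 2 ∨ b = 3 ∨ b = 4) with rfl | rfl | rfl | rfl | rfl
    · exact ⟨Units.mk0 _ (pow_ne_zero 3 ha2'), by rw [hz0]; exact qpow3 h2⟩
    · exact ⟨Units.mk0 _ (mul_ne_zero ha2' (mul_ne_zero ha2' ha1')),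
        by rw [hz1]; exact hitA h2 h1⟩
    · exact ⟨Units.mk0 _ (mul_ne_zero ha1' (mul_ne_zero ha1' ha2')),
        by rw [hz2]; exact hitA h1 h2⟩
    · exact ⟨Units.mk0 _ (pow_ne_zero 3 ha1'), by rw [hz3]; exact qpow3 h1⟩
    · exact ⟨Units.mk0 _ (pow_ne_zero 3 (mul_ne_zero ha1' ha2')),
        by rw [hz4]; exact qpow3 (hitB h1 h2)⟩
  intro a b
  by_cases ha : a = 4
  · by_cases hb : b = 4
    · exact ⟨1, by rw [ha, hb, Units.val_one, one_smul]⟩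
    · obtain ⟨lam, h⟩ := hfor b a hb
      exact ⟨lam⁻¹, by rw [Units.val_inv_eq_inv_val]; exact qswap lam.ne_zero h⟩
  · exact hfor a b ha

end
end
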